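/- arXiv:1706.00341 — 4 statements merged into one kernel-verified Lean document; each statement's English description precedes it below -/
import Mathlib

section
/- Position diffusion identity (Eq. (14) of the paper, single jump term, real amplitude): Let N ∈ ℕ, ℏ > 0, κ ∈ ℝ^N, and let f : ℝ^N → ℝ be a bounded C¹ function with bounded gradient. Let ψ : ℝ^N → ℂ be a Schwartz function and (Aψ)(p) = f(p + ℏκ)·ψ(p + ℏκ). Then for every coordinate n ∈ {1,…,N}: ℏ²·∫_{ℝ^N} |∂_{p_n}(Aψ)(p)|² dp − ℏ²·Re ∫_{ℝ^N} conj(∂_{p_n}ψ(p))·∂_{p_n}( f(p)²·ψ(p) ) dp = ℏ²·∫_{ℝ^N} (∂_{p_n} f(p))²·|ψ(p)|² dp. In particular this quantity, which equals the dissipative production rate Tr[x̂_n² D_A(|ψ⟩⟨ψ|)] of the position second moment (with x̂_n = iℏ∂_{p_n}), is nonnegative, and it is strictly positive unless (∂_{p_n} f)·ψ = 0 almost everywhere. -/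
open MeasureTheory LineDeriv

/-! By translation invariance of Lebesgue measure the recoil `ℏκ` drops out of the first
integral, which becomes `∫ |∂(fψ)|²`. With `a = ∂f` and `χ = ∂ψ` the Leibniz rule then gives
the pointwise identity `Re (conj χ · ∂(f²ψ)) = Re (conj χ (2faψ + f²χ)) = |aψ + fχ|² - a²|ψ|²`,
so no integration by parts is needed. Boundedness of `f` and `∂f` keeps `aψ`, `fχ` and
`2faψ + f²χ = f (aψ + ∂(fψ))` in `L²`, which makes every integrand integrable. -/

theorem Complex.re_conj_mul_two_mul_add_sq_mul (s t : ℝ) (z w : ℂ) :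
    ((starRingEnd ℂ) w * (2 * s * t * z + (s : ℂ) ^ 2 * w)).re
      = ‖(t : ℂ) * z + s * w‖ ^ 2 - t ^ 2 * ‖z‖ ^ 2 := by
  simp only [← Complex.normSq_eq_norm_sq, Complex.normSq_apply, Complex.mul_re, Complex.mul_im,
    Complex.add_re, Complex.add_im, Complex.conj_re, Complex.conj_im, Complex.ofReal_re,
    Complex.ofReal_im, Complex.re_ofNat, Complex.im_ofNat, ← Complex.ofReal_pow]
  ring

theorem Complex.norm_ofReal_mul_sq (t : ℝ) (z : ℂ) : ‖(t : ℂ) * z‖ ^ 2 = t ^ 2 * ‖z‖ ^ 2 := by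
  rw [norm_mul, Complex.norm_real, mul_pow, Real.norm_eq_abs, sq_abs]

section Leibniz

variable {E : Type*} [NormedAddCommGroup E] [NormedSpace ℝ E] {u : E → ℝ} {g : E → ℂ} {p : E}

theorem fderiv_ofReal_mul_apply (hu : DifferentiableAt ℝ u p) (hg : DifferentiableAt ℝ g p)
    (v : E) :
    fderiv ℝ (fun q => (u q : ℂ) * g q) p v = fderiv ℝ u p v * g p + u p * fderiv ℝ g p v := by
  simp only [← Complex.real_smul]
  rw [fderiv_fun_smul hu hg]
  simp only [add_apply, smul_apply, ContinuousLinearMap.smulRight_apply, Complex.real_smul]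
  ring

theorem fderiv_ofReal_sq_mul_apply (hu : DifferentiableAt ℝ u p) (hg : DifferentiableAt ℝ g p)
    (v : E) :
    fderiv ℝ (fun q => (u q : ℂ) ^ 2 * g q) p v
      = 2 * u p * fderiv ℝ u p v * g p + (u p : ℂ) ^ 2 * fderiv ℝ g p v := by
  have hug : DifferentiableAt ℝ (fun q => (u q : ℂ) * g q) p :=
    (Complex.ofRealCLM.differentiableAt.comp p hu).mul hg
  simp only [sq, mul_assoc]
  rw [fderiv_ofReal_mul_apply hu hug, fderiv_ofReal_mul_apply hu hg]
  ring

end Leibniz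

theorem MeasureTheory.MemLp.ofReal_mul {α : Type*} [MeasurableSpace α] {μ : Measure α}
    {p : ENNReal} {u : α → ℝ} {g : α → ℂ} (hu : AEStronglyMeasurable u μ) {C : ℝ}
    (hC : ∀ x, |u x| ≤ C) (hg : MemLp g p μ) : MemLp (fun x => (u x : ℂ) * g x) p μ :=
  hg.mul' (memLp_top_of_bound (Complex.continuous_ofReal.comp_aestronglyMeasurable hu) C
    (ae_of_all _ fun x => by simpa using hC x))

theorem integral_norm_sq_pos {α F : Type*} [MeasurableSpace α] {μ : Measure α}
    [NormedAddCommGroup F] {g : α → F} (hg : Integrable (fun x => ‖g x‖ ^ 2) μ)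
    (hg0 : ¬ g =ᵐ[μ] 0) : 0 < ∫ x, ‖g x‖ ^ 2 ∂μ := by
  refine (integral_nonneg fun x => by positivity).lt_of_ne fun h => hg0 ?_
  filter_upwards [(integral_eq_zero_iff_of_nonneg (fun x => by positivity) hg).mp h.symm]
    with x hx
  simpa using hx

section Identity

variable {E : Type*} [NormedAddCommGroup E] [NormedSpace ℝ E] [FiniteDimensional ℝ E]
  [MeasurableSpace E] [BorelSpace E] (μ : Measure E) [μ.IsAddHaarMeasure]

theorem memLp_ofReal_fderiv_apply_mul {f : E → ℝ} (hf : ContDiff ℝ 1 f) (v : E) {Ma : ℝ}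
    (hMa : ∀ p, |fderiv ℝ f p v| ≤ Ma) (ψ : SchwartzMap E ℂ) :
    MemLp (fun p => (fderiv ℝ f p v : ℂ) * ψ p) 2 μ :=
  (ψ.memLp 2 μ).ofReal_mul
    ((hf.continuous_fderiv one_ne_zero).clm_apply continuous_const).aestronglyMeasurable hMa

theorem integral_norm_sq_fderiv_translate_sub_re_integral_eq
    {f : E → ℝ} (hf : ContDiff ℝ 1 f) {Mf : ℝ} (hMf : ∀ p, |f p| ≤ Mf)
    (v : E) {Ma : ℝ} (hMa : ∀ p, |fderiv ℝ f p v| ≤ Ma) (ψ : SchwartzMap E ℂ) (c : E) :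
    (∫ p, ‖fderiv ℝ (fun q => (f (q + c) : ℂ) * ψ (q + c)) p v‖ ^ 2 ∂μ)
      - (∫ p, (starRingEnd ℂ) (fderiv ℝ ψ p v) *
          fderiv ℝ (fun q => (f q : ℂ) ^ 2 * ψ q) p v ∂μ).re
      = ∫ p, fderiv ℝ f p v ^ 2 * ‖ψ p‖ ^ 2 ∂μ := by
  set a : E → ℝ := fun p => fderiv ℝ f p v
  set χ : SchwartzMap E ℂ := ∂_{v} ψ
  have hχ : ∀ p, fderiv ℝ ψ p v = χ p := fun p =>
    (SchwartzMap.lineDerivOp_apply_eq_fderiv v ψ p).symm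
  have hfd : Differentiable ℝ f := hf.differentiable one_ne_zero
  have hψd : Differentiable ℝ ψ := ψ.differentiable
  set G : E → ℂ := fun p => (a p : ℂ) * ψ p + f p * χ p
  have haψ : MemLp (fun p => (a p : ℂ) * ψ p) 2 μ := memLp_ofReal_fderiv_apply_mul μ hf v hMa ψ
  have hfχ : MemLp (fun p => (f p : ℂ) * χ p) 2 μ :=
    (χ.memLp 2 μ).ofReal_mul hf.continuous.aestronglyMeasurable hMf
  have hG : MemLp G 2 μ := haψ.add hfχ
  have hR : MemLp (fun p => 2 * (f p : ℂ) * a p * ψ p + (f p : ℂ) ^ 2 * χ p) 2 μ := by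
    convert (haψ.add hG).ofReal_mul hf.continuous.aestronglyMeasurable hMf using 1
    ext p
    simp only [G, Pi.add_apply]
    ring
  have hI : Integrable (fun p => (starRingEnd ℂ) (χ p) *
      (2 * (f p : ℂ) * a p * ψ p + (f p : ℂ) ^ 2 * χ p)) μ :=
    (χ.memLp 2 μ).star.integrable_mul hR
  have hT1 : ∫ p, ‖fderiv ℝ (fun q => (f (q + c) : ℂ) * ψ (q + c)) p v‖ ^ 2 ∂μ
      = ∫ p, ‖G p‖ ^ 2 ∂μ := by
    simp only [fderiv_comp_add_right (f := fun q => (f q : ℂ) * ψ q),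
      fderiv_ofReal_mul_apply (hfd _) (hψd _), hχ]
    exact integral_add_right_eq_self (fun p => ‖G p‖ ^ 2) c
  have hT2 : (∫ p, (starRingEnd ℂ) (fderiv ℝ ψ p v) *
        fderiv ℝ (fun q => (f q : ℂ) ^ 2 * ψ q) p v ∂μ).re
      = ∫ p, ‖G p‖ ^ 2 - a p ^ 2 * ‖ψ p‖ ^ 2 ∂μ := by
    simp only [fderiv_ofReal_sq_mul_apply (hfd _) (hψd _), hχ]
    rw [← RCLike.re_to_complex, ← integral_re hI]
    simp only [RCLike.re_to_complex, Complex.re_conj_mul_two_mul_add_sq_mul]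
    rfl
  have hGint : Integrable (fun p => ‖G p‖ ^ 2) μ := hG.integrable_norm_pow two_ne_zero
  have hJint : Integrable (fun p => ‖(a p : ℂ) * ψ p‖ ^ 2) μ :=
    haψ.integrable_norm_pow two_ne_zero
  simp only [Complex.norm_ofReal_mul_sq] at hJint
  rw [hT1, hT2, integral_sub hGint hJint, sub_sub_cancel]

end Identity

/-- **Position diffusion identity** (Eq. (14) of the paper, single jump term, real
amplitude). In the momentum representation with position operator `x̂_n = iℏ∂_{p_n}`,
for the translation-invariant jump operator `(Aψ)(p) = f(p + ℏκ)·ψ(p + ℏκ)` with `f`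
real, bounded, `C¹` with bounded gradient, and `ψ` Schwartz, the dissipative production
rate `Tr[x̂_n² D_A(|ψ⟩⟨ψ|)]` of the position second moment equals
`ℏ²∫(∂_{p_n}f)²|ψ|²`, which is nonnegative and strictly positive unless
`(∂_{p_n}f)·ψ = 0` almost everywhere. -/
theorem position_diffusion_identity
    (N : ℕ) (ℏ : ℝ) (hℏ : 0 < ℏ) (κ : EuclideanSpace ℝ (Fin N))
    (f : EuclideanSpace ℝ (Fin N) → ℝ)
    (hf_smooth : ContDiff ℝ 1 f)
    (hf_bdd : ∃ M : ℝ, ∀ p, |f p| ≤ M)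
    (hf_grad_bdd : ∃ M : ℝ, ∀ p, ‖fderiv ℝ f p‖ ≤ M)
    (ψ : SchwartzMap (EuclideanSpace ℝ (Fin N)) ℂ)
    (n : Fin N) :
    ℏ ^ 2 * (∫ p : EuclideanSpace ℝ (Fin N),
        ‖fderiv ℝ (fun q => (f (q + ℏ • κ) : ℂ) * ψ (q + ℏ • κ)) p
          (EuclideanSpace.single n 1)‖ ^ 2)
      - ℏ ^ 2 * (∫ p : EuclideanSpace ℝ (Fin N),
          (starRingEnd ℂ) (fderiv ℝ (⇑ψ) p (EuclideanSpace.single n 1)) *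
            fderiv ℝ (fun q => ((f q : ℂ) ^ 2) * ψ q) p (EuclideanSpace.single n 1)).re
      = ℏ ^ 2 * (∫ p : EuclideanSpace ℝ (Fin N),
          (fderiv ℝ f p (EuclideanSpace.single n 1)) ^ 2 * ‖ψ p‖ ^ 2) ∧
    0 ≤ ℏ ^ 2 * (∫ p : EuclideanSpace ℝ (Fin N),
          (fderiv ℝ f p (EuclideanSpace.single n 1)) ^ 2 * ‖ψ p‖ ^ 2) ∧
    (¬ ((fun p : EuclideanSpace ℝ (Fin N) =>
          (fderiv ℝ f p (EuclideanSpace.single n 1) : ℂ) * ψ p)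
        =ᵐ[volume] 0) →
      0 < ℏ ^ 2 * (∫ p : EuclideanSpace ℝ (Fin N),
          (fderiv ℝ f p (EuclideanSpace.single n 1)) ^ 2 * ‖ψ p‖ ^ 2)) := by
  obtain ⟨Mf, hMf⟩ := hf_bdd
  obtain ⟨Mg, hMg⟩ := hf_grad_bdd
  set e : EuclideanSpace ℝ (Fin N) := EuclideanSpace.single n 1
  have hMa : ∀ p, |fderiv ℝ f p e| ≤ Mg := fun p =>
    calc |fderiv ℝ f p e| ≤ ‖fderiv ℝ f p‖ * ‖e‖ := (fderiv ℝ f p).le_opNorm e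
      _ ≤ Mg := by simpa [e] using hMg p
  have hJint : Integrable (fun p => ‖(fderiv ℝ f p e : ℂ) * ψ p‖ ^ 2) :=
    (memLp_ofReal_fderiv_apply_mul volume hf_smooth e hMa ψ).integrable_norm_pow two_ne_zero
  refine ⟨?_, by positivity, fun hne => mul_pos (by positivity) ?_⟩
  · rw [← mul_sub, integral_norm_sq_fderiv_translate_sub_re_integral_eq volume hf_smooth hMf e
      hMa ψ (ℏ • κ)]
  · simpa only [Complex.norm_ofReal_mul_sq] using integral_norm_sq_pos hJint hne
end

section
/- No-go theorem for pure steady states (Theorem 1 of the paper, driftless form): Let N, K ∈ ℕ with K ≥ 1, ℏ > 0, κ_k ∈ ℝ^N and f_k : ℝ^N → ℂ measurable for k = 1,…,K. Let φ ∈ L²(ℝ^N, ℂ) with φ(p) ≠ 0 for almost every p. Suppose the steady-state conditions hold: (i) Σ_{k=1}^K |f_k(p + ℏκ_k)·φ(p + ℏκ_k)|² = (Σ_{k=1}^K |f_k(p)|²)·|φ(p)|² for almost every p ∈ ℝ^N, and (ii) Σ_{k=1}^K f_k(p + ℏκ_k)·φ(p + ℏκ_k)·conj( f_k(p' + ℏκ_k)·φ(p'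 + ℏκ_k) ) = (1/2)·Σ_{k=1}^K ( |f_k(p)|² + |f_k(p')|² )·φ(p)·conj(φ(p')) for almost every (p, p') ∈ ℝ^N × ℝ^N. Then for every k there exists a constant c_k ∈ ℂ such that f_k(p) = c_k for almost every p, and c_k ≠ 0 implies κ_k = 0. Consequently every jump operator is a scalar multiple of the identity and the dissipator Σ_k D_{A(κ_k, f_k)} vanishes identically: no nontrivial translation-invariant Markovian dissipation admits |φ⟩⟨φ| as a steady state. -/
/-!
Comparing the kernel identity (ii) at `(p, p')` with the diagonal identity (i) at `p` and at `p'`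
is the equality case of Cauchy–Schwarz: the vector `(f_k(p + ℏκ_k) φ(p + ℏκ_k) / φ(p))_k` does not
depend on `p`, so `f_k(p + ℏκ_k) φ(p + ℏκ_k) = c_k φ(p)`. Fed back into (i), this makes `|φ|²` an
integrable density invariant under the random walk with steps `ℏκ_k` and weights `|c_k|²`:
`∑ |c_k|² |φ(q - ℏκ_k)|² = (∑ |c_k|²) |φ(q)|²`. After a Fourier transform, the convex combination
of the characters `e(-⟨ℏκ_k, ξ⟩)` equals `1` wherever the transform of `|φ|²` does not vanish,
hence near `ξ = 0`; so every character with `c_k ≠ 0` is trivial near `0`, i.e. `κ_k = 0`.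
-/

open MeasureTheory Filter Topology Real
open scoped RealInnerProductSpace FourierTransform

theorem eq_of_sum_norm_sq_add_sum_norm_sq_eq {ι : Type*} [Fintype ι] {v w : ι → ℂ}
    (h : ∑ i, ‖v i‖ ^ 2 + ∑ i, ‖w i‖ ^ 2 = 2 * (∑ i, v i * starRingEnd ℂ (w i)).re) :
    v = w := by
  have hdist : ∑ i, ‖v i - w i‖ ^ 2 = 0 := by
    simp only [Complex.sq_norm, Complex.normSq_sub, Finset.sum_sub_distrib,
      Finset.sum_add_distrib, ← Finset.mul_sum, ← Complex.re_sum] at h ⊢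
    linarith
  funext i
  simpa [sub_eq_zero] using
    (Finset.sum_eq_zero_iff_of_nonneg fun j _ => sq_nonneg ‖v j - w j‖).mp hdist i
      (Finset.mem_univ i)

theorem div_eq_div_of_sum_mul_conj_eq {ι : Type*} [Fintype ι] {v w : ι → ℂ} {x y : ℂ}
    (hx : x ≠ 0) (hy : y ≠ 0) {A B : ℝ}
    (hv : ∑ i, ‖v i‖ ^ 2 = A * ‖x‖ ^ 2) (hw : ∑ i, ‖w i‖ ^ 2 = B * ‖y‖ ^ 2)
    (hvw : ∑ i, v i * starRingEnd ℂ (w i) = (1 / 2) * ((A + B : ℝ) : ℂ) * (x * starRingEnd ℂ y)) :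
    (fun i => v i / x) = fun i => w i / y := by
  have hxy : x * starRingEnd ℂ y ≠ 0 := mul_ne_zero hx (by simpa using hy)
  apply eq_of_sum_norm_sq_add_sum_norm_sq_eq
  simp only [norm_div, div_pow, map_div₀, div_mul_div_comm, ← Finset.sum_div, hv, hw, hvw]
  have hx2 : ‖x‖ ^ 2 ≠ 0 := by positivity
  have hy2 : ‖y‖ ^ 2 ≠ 0 := by positivity
  rw [mul_div_cancel_right₀ _ hx2, mul_div_cancel_right₀ _ hy2, mul_div_cancel_right₀ _ hxy]
  simp

theorem exists_ae_eq_const_of_ae_prod_eq {α β : Type*} [MeasurableSpace α] {μ : Measure α}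
    [SFinite μ] [NeZero μ] {g : α → β} (h : ∀ᵐ q ∂μ.prod μ, g q.1 = g q.2) :
    ∃ c, ∀ᵐ p ∂μ, g p = c := by
  obtain ⟨p₀, hp₀⟩ := (Measure.ae_ae_of_ae_prod h).exists
  exact ⟨g p₀, hp₀.mono fun _ hp => hp.symm⟩

section SteadyState

variable {α ι : Type*} [MeasurableSpace α] {μ : Measure α} [Fintype ι]
  {u : α → ι → ℂ} {F : α → ℝ} {φ : α → ℂ}

theorem exists_ae_eq_mul_of_kernel_identity [SFinite μ] [NeZero μ] (hφ : ∀ᵐ p ∂μ, φ p ≠ 0)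
    (hdiag : ∀ᵐ p ∂μ, ∑ i, ‖u p i‖ ^ 2 = F p * ‖φ p‖ ^ 2)
    (hker : ∀ᵐ q ∂μ.prod μ, ∑ i, u q.1 i * starRingEnd ℂ (u q.2 i)
      = (1 / 2) * ((F q.1 + F q.2 : ℝ) : ℂ) * (φ q.1 * starRingEnd ℂ (φ q.2))) :
    ∃ c : ι → ℂ, ∀ᵐ p ∂μ, ∀ i, u p i = c i * φ p := by
  have hratio : ∀ᵐ q ∂μ.prod μ, (fun i => u q.1 i / φ q.1) = fun i => u q.2 i / φ q.2 := by
    filter_upwards [hker, Measure.quasiMeasurePreserving_fst.ae hdiag,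
      Measure.quasiMeasurePreserving_snd.ae hdiag, Measure.quasiMeasurePreserving_fst.ae hφ,
      Measure.quasiMeasurePreserving_snd.ae hφ] with q hq hq₁ hq₂ hφ₁ hφ₂
    exact div_eq_div_of_sum_mul_conj_eq hφ₁ hφ₂ hq₁ hq₂ hq
  obtain ⟨c, hc⟩ := exists_ae_eq_const_of_ae_prod_eq (g := fun p i => u p i / φ p) hratio
  refine ⟨c, ?_⟩
  filter_upwards [hc, hφ] with p hp hφp i
  rw [← hp, div_mul_cancel₀ _ hφp]

theorem ae_eq_sum_norm_sq_of_ae_eq_mul {c : ι → ℂ} (hφ : ∀ᵐ p ∂μ, φ p ≠ 0)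
    (hdiag : ∀ᵐ p ∂μ, ∑ i, ‖u p i‖ ^ 2 = F p * ‖φ p‖ ^ 2)
    (hc : ∀ᵐ p ∂μ, ∀ i, u p i = c i * φ p) :
    ∀ᵐ p ∂μ, F p = ∑ i, ‖c i‖ ^ 2 := by
  filter_upwards [hφ, hdiag, hc] with p hφp hp hcp
  refine mul_right_cancel₀ (pow_ne_zero 2 (norm_ne_zero_iff.mpr hφp)) ?_
  simp only [← hp, hcp, norm_mul, mul_pow, Finset.sum_mul]

end SteadyState

theorem integral_norm_sq_ne_zero {α E : Type*} [MeasurableSpace α] {μ : Measure α} [NeZero μ]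
    [NormedAddCommGroup E] {φ : α → E} (hφ : MemLp φ 2 μ) (hne : ∀ᵐ p ∂μ, φ p ≠ 0) :
    ∫ p, ‖φ p‖ ^ 2 ∂μ ≠ 0 := fun h0 => by
  obtain ⟨p, hp0, hφp⟩ := (((integral_eq_zero_iff_of_nonneg (fun p => sq_nonneg ‖φ p‖)
    (hφ.integrable_norm_pow two_ne_zero)).mp h0).and hne).exists
  simp_all

theorem ae_of_ae_comp_add_right {G : Type*} [AddGroup G] [MeasurableSpace G] [MeasurableAdd G]
    {μ : Measure G} [μ.IsAddRightInvariant] (a : G) {P : G → Prop}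
    (h : ∀ᵐ p ∂μ, P (p + a)) : ∀ᵐ q ∂μ, P q := by
  simpa using (measurePreserving_sub_right μ a).quasiMeasurePreserving.ae h

namespace VectorFourier

variable {𝕜 : Type*} [CommRing 𝕜] [TopologicalSpace 𝕜] [IsTopologicalRing 𝕜]
  {V W : Type*} [AddCommGroup V] [Module 𝕜 V] [MeasurableSpace V] [TopologicalSpace V]
  [BorelSpace V] [AddCommGroup W] [Module 𝕜 W] [TopologicalSpace W]
  {E : Type*} [NormedAddCommGroup E] [NormedSpace ℂ E]
  {e : AddChar 𝕜 Circle} {μ : Measure V} {L : V →ₗ[𝕜] W →ₗ[𝕜] 𝕜}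

theorem fourierIntegral_finset_sum (he : Continuous e)
    (hL : Continuous fun p : V × W ↦ L p.1 p.2) {ι : Type*} (s : Finset ι) {g : ι → V → E}
    (hg : ∀ i ∈ s, Integrable (g i) μ) :
    fourierIntegral e μ L (∑ i ∈ s, g i) = ∑ i ∈ s, fourierIntegral e μ L (g i) := by
  ext w
  simp only [fourierIntegral, Finset.sum_apply, Finset.smul_sum]
  exact integral_finsetSum s fun i hi => (fourierIntegral_convergent_iff he hL w).2 (hg i hi)

end VectorFourier

theorem Real.eq_zero_of_eventually_cos_mul_eq_one {s : ℝ}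
    (h : ∀ᶠ t in 𝓝 (0 : ℝ), cos (t * s) = 1) : s = 0 := by
  have hsmall : ∀ᶠ t in 𝓝 (0 : ℝ), t * s ∈ Set.Ioo (-(2 * π)) (2 * π) := by
    have : Tendsto (fun t : ℝ => t * s) (𝓝 0) (𝓝 0) := by
      simpa using (tendsto_id (x := 𝓝 (0 : ℝ))).mul_const s
    exact this.eventually (Ioo_mem_nhds (by linarith [pi_pos]) (by linarith [pi_pos]))
  obtain ⟨t, ⟨hcos, hlo, hhi⟩, ht0⟩ :=
    (((h.and hsmall).filter_mono nhdsWithin_le_nhds).and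
      (self_mem_nhdsWithin (s := {(0 : ℝ)}ᶜ))).exists
  exact (mul_eq_zero.mp ((cos_eq_one_iff_of_lt_of_lt hlo hhi).mp hcos)).resolve_left ht0

section InnerProductSpace

variable {V : Type*} [NormedAddCommGroup V] [InnerProductSpace ℝ V]

theorem eq_zero_of_eventually_cos_inner_eq_one {a : V}
    (h : ∀ᶠ ξ in 𝓝 (0 : V), cos (2 * π * ⟪a, ξ⟫) = 1) : a = 0 := by
  have hline : Tendsto (fun t : ℝ => t • a) (𝓝 0) (𝓝 0) := by
    simpa using (tendsto_id (x := 𝓝 (0 : ℝ))).smul_const a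
  have := Real.eq_zero_of_eventually_cos_mul_eq_one <| (hline.eventually h).mono fun t ht => by
    rwa [real_inner_smul_right, real_inner_self_eq_norm_sq, ← mul_assoc, mul_comm _ t,
      mul_assoc] at ht
  simpa [pi_ne_zero] using this

variable [MeasurableSpace V] [BorelSpace V] {μ : Measure V}
  {E : Type*} [NormedAddCommGroup E] [NormedSpace ℂ E]

theorem fourierIntegral_sum_smul_comp_sub [μ.IsAddRightInvariant] {ι : Type*} [Fintype ι]
    {H : V → E} (hH : Integrable H μ) (w : ι → ℝ) (a : ι → V) (ξ : V) :
    VectorFourier.fourierIntegral 𝐞 μ (innerₗ V) (fun v => ∑ j, w j • H (v - a j)) ξ =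
      (∑ j, (w j : ℂ) * 𝐞 (-⟪a j, ξ⟫)) • VectorFourier.fourierIntegral 𝐞 μ (innerₗ V) H ξ := by
  have hcomp : ∀ j, (fun v => w j • H (v - a j)) = (w j : ℂ) • (H ∘ fun v => v + -a j) := by
    intro j; ext v; simp [sub_eq_add_neg, Complex.coe_smul]
  have hint : ∀ j ∈ Finset.univ, Integrable (fun v => w j • H (v - a j)) μ :=
    fun j _ => (hH.comp_sub_right (a j)).smul (w j)
  rw [← Finset.sum_fn, VectorFourier.fourierIntegral_finset_sum continuous_fourierChar
    continuous_inner _ hint, Finset.sum_apply, Finset.sum_smul]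
  refine Finset.sum_congr rfl fun j _ => ?_
  rw [hcomp, VectorFourier.fourierIntegral_const_smul,
    VectorFourier.fourierIntegral_comp_add_right]
  simp [Circle.smul_def, mul_smul]

theorem eq_zero_of_ae_sum_smul_comp_sub_eq [μ.IsAddRightInvariant] {ι : Type*} [Fintype ι]
    {H : V → E} (hH : Integrable H μ) (hH0 : ∫ v, H v ∂μ ≠ 0)
    {w : ι → ℝ} (hw : ∀ j, 0 ≤ w j) {a : ι → V}
    (h : ∀ᵐ v ∂μ, ∑ j, w j • H (v - a j) = (∑ j, w j) • H v) {j : ι} (hj : w j ≠ 0) :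
    a j = 0 := by
  set Ĥ := VectorFourier.fourierIntegral 𝐞 μ (innerₗ V) H
  have hmult : ∀ ξ, (∑ j, (w j : ℂ) * 𝐞 (-⟪a j, ξ⟫)) • Ĥ ξ = ((∑ j, w j : ℝ) : ℂ) • Ĥ ξ := by
    intro ξ
    rw [← fourierIntegral_sum_smul_comp_sub hH,
      VectorFourier.fourierIntegral_congr_ae 𝐞 μ (innerₗ V) h]
    simp_rw [← Complex.coe_smul]
    exact congrFun (VectorFourier.fourierIntegral_const_smul 𝐞 μ (innerₗ V) H _) ξ
  have hĤ0 : Ĥ 0 = ∫ v, H v ∂μ := by simp [Ĥ, VectorFourier.fourierIntegral]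
  have hne : ∀ᶠ ξ in 𝓝 0, Ĥ ξ ≠ 0 :=
    (VectorFourier.fourierIntegral_continuous continuous_fourierChar continuous_inner
      hH).continuousAt.eventually_ne (show Ĥ 0 ≠ 0 by rwa [hĤ0])
  apply eq_zero_of_eventually_cos_inner_eq_one
  filter_upwards [hne] with ξ hξ
  have hsum := smul_left_injective ℂ hξ (hmult ξ)
  have hre : ∑ j, w j * cos (2 * π * ⟪a j, ξ⟫) = ∑ j, w j := by
    simpa [Complex.re_sum, Real.fourierChar_apply, Complex.exp_re] using
      congrArg Complex.re hsum
  have := (Finset.sum_eq_sum_iff_of_le fun j _ =>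
    mul_le_of_le_one_right (hw j) (cos_le_one _)).mp hre j (Finset.mem_univ j)
  exact (mul_eq_left₀ hj).mp this

end InnerProductSpace

theorem no_go_pure_steady_state_general
    (N K : ℕ) (ℏ : ℝ) (hℏ : 0 < ℏ)
    (κ : Fin K → EuclideanSpace ℝ (Fin N))
    (f : Fin K → EuclideanSpace ℝ (Fin N) → ℂ)
    (φ : EuclideanSpace ℝ (Fin N) → ℂ)
    (hφ_L2 : MemLp φ 2 (volume : Measure (EuclideanSpace ℝ (Fin N))))
    (hφ_ne : ∀ᵐ p : EuclideanSpace ℝ (Fin N) ∂volume, φ p ≠ 0)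
    (hdiag : ∀ᵐ p : EuclideanSpace ℝ (Fin N) ∂volume,
      ∑ k : Fin K, ‖f k (p + ℏ • κ k) * φ (p + ℏ • κ k)‖ ^ 2
        = (∑ k : Fin K, ‖f k p‖ ^ 2) * ‖φ p‖ ^ 2)
    (hker : ∀ᵐ q : EuclideanSpace ℝ (Fin N) × EuclideanSpace ℝ (Fin N)
        ∂(volume.prod volume),
      ∑ k : Fin K, f k (q.1 + ℏ • κ k) * φ (q.1 + ℏ • κ k) *
          (starRingEnd ℂ) (f k (q.2 + ℏ • κ k) * φ (q.2 + ℏ • κ k))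
        = (1 / 2 : ℂ) * ∑ k : Fin K,
            ((‖f k q.1‖ ^ 2 + ‖f k q.2‖ ^ 2 : ℝ) : ℂ) *
              (φ q.1 * (starRingEnd ℂ) (φ q.2))) :
    ∀ k : Fin K, ∃ c : ℂ,
      (∀ᵐ p : EuclideanSpace ℝ (Fin N) ∂volume, f k p = c) ∧ (c ≠ 0 → κ k = 0) := by
  obtain ⟨c, hc⟩ := exists_ae_eq_mul_of_kernel_identity
    (u := fun p k => f k (p + ℏ • κ k) * φ (p + ℏ • κ k)) hφ_ne hdiag <| by
      filter_upwards [hker] with q hq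
      rw [hq, ← Finset.sum_mul, ← Complex.ofReal_sum, Finset.sum_add_distrib, mul_assoc]
  have hrate := ae_eq_sum_norm_sq_of_ae_eq_mul hφ_ne hdiag hc
  have hshift : ∀ᵐ q ∂volume, ∀ k, f k q * φ q = c k * φ (q - ℏ • κ k) :=
    ae_all_iff.2 fun k => ae_of_ae_comp_add_right (ℏ • κ k) <| hc.mono fun p hp => by
      simpa using hp k
  have hstat : ∀ᵐ q ∂volume, ∑ k, ‖c k‖ ^ 2 • ((‖φ (q - ℏ • κ k)‖ ^ 2 : ℝ) : ℂ)
      = (∑ k, ‖c k‖ ^ 2) • ((‖φ q‖ ^ 2 : ℝ) : ℂ) := by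
    filter_upwards [hshift, hrate] with q hq hrq
    have : ∑ k, ‖c k‖ ^ 2 * ‖φ (q - ℏ • κ k)‖ ^ 2 = (∑ k, ‖c k‖ ^ 2) * ‖φ q‖ ^ 2 := by
      simp only [← hrq, Finset.sum_mul, ← mul_pow, ← norm_mul, hq]
    simpa [Complex.real_smul] using congrArg (fun r : ℝ => (r : ℂ)) this
  have hκ : ∀ k, c k ≠ 0 → κ k = 0 := fun k hck =>
    (smul_eq_zero.mp (eq_zero_of_ae_sum_smul_comp_sub_eq (H := fun q => ((‖φ q‖ ^ 2 : ℝ) : ℂ))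
      (w := fun k => ‖c k‖ ^ 2) (a := fun k => ℏ • κ k)
      (hφ_L2.integrable_norm_pow two_ne_zero).ofReal
      (by rw [integral_complex_ofReal, Complex.ofReal_ne_zero]
          exact integral_norm_sq_ne_zero hφ_L2 hφ_ne)
      (fun _ => sq_nonneg _) hstat
      (by positivity))).resolve_left hℏ.ne'
  intro k
  refine ⟨c k, ?_, hκ k⟩
  filter_upwards [hshift, hφ_ne] with q hq hφq
  refine mul_right_cancel₀ hφq ?_
  rcases eq_or_ne (c k) 0 with hck | hck
  · simpa [hck] using hq k
  · simpa [hκ k hck] using hq k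

/-- **No-go theorem for pure steady states** (Theorem 1 of the paper, driftless form).
In the momentum representation, let `φ ∈ L²(ℝ^N, ℂ)` be nonzero almost everywhere
(e.g. a Hamiltonian eigenstate). If the pure state `|φ⟩⟨φ|` is a steady state of the
translation-invariant Lindblad dissipator `Σ_k D_{A(κ_k, f_k)}`, expressed through its
diagonal part (i) and its integral-kernel identity (ii), then every amplitude `f_k` is
a.e. constant, and a nonzero constant forces the recoil momentum `ℏκ_k` to vanish: the
dissipator acts trivially. -/
theorem no_go_pure_steady_state
    (N K : ℕ) (hK : 1 ≤ K) (ℏ : ℝ) (hℏ : 0 < ℏ)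
    (κ : Fin K → EuclideanSpace ℝ (Fin N))
    (f : Fin K → EuclideanSpace ℝ (Fin N) → ℂ)
    (hf_meas : ∀ k, Measurable (f k))
    (φ : EuclideanSpace ℝ (Fin N) → ℂ)
    (hφ_L2 : MemLp φ 2 (volume : Measure (EuclideanSpace ℝ (Fin N))))
    (hφ_ne : ∀ᵐ p : EuclideanSpace ℝ (Fin N) ∂volume, φ p ≠ 0)
    (hdiag : ∀ᵐ p : EuclideanSpace ℝ (Fin N) ∂volume,
      ∑ k : Fin K, ‖f k (p + ℏ • κ k) * φ (p + ℏ • κ k)‖ ^ 2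
        = (∑ k : Fin K, ‖f k p‖ ^ 2) * ‖φ p‖ ^ 2)
    (hker : ∀ᵐ q : EuclideanSpace ℝ (Fin N) × EuclideanSpace ℝ (Fin N)
        ∂(volume.prod volume),
      ∑ k : Fin K, f k (q.1 + ℏ • κ k) * φ (q.1 + ℏ • κ k) *
          (starRingEnd ℂ) (f k (q.2 + ℏ • κ k) * φ (q.2 + ℏ • κ k))
        = (1 / 2 : ℂ) * ∑ k : Fin K,
            ((‖f k q.1‖ ^ 2 + ‖f k q.2‖ ^ 2 : ℝ) : ℂ) *
              (φ q.1 * (starRingEnd ℂ) (φ q.2))) :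
    ∀ k : Fin K, ∃ c : ℂ,
      (∀ᵐ p : EuclideanSpace ℝ (Fin N) ∂volume, f k p = c) ∧ (c ≠ 0 → κ k = 0) :=
  no_go_pure_steady_state_general N K ℏ hℏ κ f φ hφ_L2 hφ_ne hdiag hker
end

section
/- Weighted translations with constant-modulus weight have no eigenvectors: Let N ∈ ℕ, ℏ > 0, κ ∈ ℝ^N with κ ≠ 0, c > 0, and let f : ℝ^N → ℂ be measurable with |f(p)| = c for almost every p. Define the bounded operator A on L²(ℝ^N, ℂ) by (Aψ)(p) = f(p + ℏκ)·ψ(p + ℏκ). Then A has no eigenvectors: for every μ ∈ ℂ and φ ∈ L²(ℝ^N, ℂ), if Aφ = μφ then φ = 0 almost everywhere. -/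
/-!
Write `a = ℏκ` and `h = ‖φ‖²`. Taking norms in the eigenvalue equation gives
`h(p + a) = (|μ|/c)² h(p)` a.e.; integrating and using translation invariance of Lebesgue
measure, either `∫ h = 0` or `|μ| = c`. In the latter case `h` is an integrable `a`-periodic
function, so the integral of `h` over a ball equals its integral over the ball translated by
`-n a`, which tends to `0` by dominated convergence; hence `h` vanishes on every ball.
-/

open MeasureTheory Filter Topology Bornology

theorem ae_comp_add_nsmul_eq {G α : Type*} [AddMonoid G] [MeasurableSpace G]
    [MeasurableAdd G] {μ : Measure G} [μ.IsAddRightInvariant] {g : G → α} {a : G}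
    (hg : ∀ᵐ p ∂μ, g (p + a) = g p) (n : ℕ) : ∀ᵐ p ∂μ, g (p + n • a) = g p := by
  induction n with
  | zero => simp
  | succ n ih =>
    have ih_shift : ∀ᵐ p ∂μ, g (p + a + n • a) = g (p + a) :=
      (measurePreserving_add_right μ a).quasiMeasurePreserving.ae ih
    filter_upwards [ih_shift, hg] with p hshift hp
    rw [succ_nsmul', ← add_assoc, hshift, hp]

theorem setIntegral_preimage_add_nsmul_of_periodic {G F : Type*} [AddGroup G] [MeasurableSpace G]
    [MeasurableAdd G] {μ : Measure G} [μ.IsAddRightInvariant] [NormedAddCommGroup F]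
    [NormedSpace ℝ F] {g : G → F} {a : G} (hg : ∀ᵐ p ∂μ, g (p + a) = g p) {B : Set G}
    (hBm : MeasurableSet B) (n : ℕ) :
    ∫ p in (· + n • a) ⁻¹' B, g p ∂μ = ∫ p in B, g p ∂μ := by
  rw [← integral_indicator hBm, ← integral_add_right_eq_self (B.indicator g) (n • a),
    ← integral_indicator (hBm.preimage (measurable_add_const _))]
  refine integral_congr_ae ?_
  filter_upwards [ae_comp_add_nsmul_eq hg n] with p hp
  by_cases hpB : p + n • a ∈ B
  · simp [Set.indicator_of_mem, hpB, hp]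
  · simp [Set.indicator_of_notMem, hpB]

section Translation

variable {E : Type*} [NormedAddCommGroup E] [NormedSpace ℝ E]

theorem tendsto_nsmul_cobounded {a : E} (ha : a ≠ 0) :
    Tendsto (fun n : ℕ => n • a) atTop (cobounded E) := by
  rw [← tendsto_norm_atTop_iff_cobounded]
  simpa only [RCLike.norm_nsmul ℝ, nsmul_eq_mul] using
    tendsto_natCast_atTop_atTop.atTop_mul_const (norm_pos_iff.2 ha)

theorem eventually_add_nsmul_notMem {B : Set E} (hB : IsBounded B) {a : E} (ha : a ≠ 0)
    (p : E) : ∀ᶠ n : ℕ in atTop, p + n • a ∉ B :=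
  ((tendsto_const_add_cobounded p).comp (tendsto_nsmul_cobounded ha)).eventually_mem
    (isBounded_def.1 hB)

variable [MeasurableSpace E] [BorelSpace E] {μ : Measure E}
  {F : Type*} [NormedAddCommGroup F] [NormedSpace ℝ F]

theorem tendsto_setIntegral_preimage_add_nsmul {g : E → F} (hg : Integrable g μ) {B : Set E}
    (hB : IsBounded B) (hBm : MeasurableSet B) {a : E} (ha : a ≠ 0) :
    Tendsto (fun n : ℕ => ∫ p in (· + n • a) ⁻¹' B, g p ∂μ) atTop (𝓝 0) := by
  have hmeas : ∀ n : ℕ, MeasurableSet ((· + n • a) ⁻¹' B) :=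
    fun n => hBm.preimage (measurable_add_const _)
  simp only [← integral_indicator (hmeas _)]
  rw [← integral_zero E F]
  refine tendsto_integral_of_dominated_convergence (fun p => ‖g p‖)
    (fun n => hg.aestronglyMeasurable.indicator (hmeas n)) hg.norm
    (fun n => Eventually.of_forall fun p => norm_indicator_le_norm_self g p) ?_
  refine Eventually.of_forall fun p => tendsto_const_nhds.congr' ?_
  filter_upwards [eventually_add_nsmul_notMem hB ha p] with n hn
  exact (Set.indicator_of_notMem (s := (· + n • a) ⁻¹' B) hn g).symm

variable [μ.IsAddRightInvariant]

theorem ae_eq_zero_of_periodic {h : E → ℝ} (h_nonneg : 0 ≤ h) (hh : Integrable h μ) {a : E}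
    (ha : a ≠ 0) (h_periodic : ∀ᵐ p ∂μ, h (p + a) = h p) : h =ᵐ[μ] 0 := by
  have hball : ∀ R : ℕ, ∀ᵐ p ∂μ.restrict (Metric.ball 0 R), h p = 0 := by
    intro R
    have h_tendsto := (tendsto_setIntegral_preimage_add_nsmul hh
      (Metric.isBounded_ball (x := (0 : E)) (r := R)) measurableSet_ball ha).congr
      (setIntegral_preimage_add_nsmul_of_periodic h_periodic measurableSet_ball)
    have hzero : ∫ p in Metric.ball 0 R, h p ∂μ = 0 :=
      (tendsto_nhds_unique h_tendsto tendsto_const_nhds).symm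
    exact (setIntegral_eq_zero_iff_of_nonneg_ae (Eventually.of_forall h_nonneg)
      hh.integrableOn).1 hzero
  rw [← Measure.restrict_univ (μ := μ), ← Metric.iUnion_ball_nat 0, EventuallyEq,
    ae_restrict_iUnion_iff]
  exact hball

theorem ae_eq_zero_of_comp_add_ae_eq_mul {h : E → ℝ} (h_nonneg : 0 ≤ h) (hh : Integrable h μ)
    {a : E} (ha : a ≠ 0) {s : ℝ} (h_scale : ∀ᵐ p ∂μ, h (p + a) = s * h p) : h =ᵐ[μ] 0 := by
  have h_integral : ∫ p, h p ∂μ = s * ∫ p, h p ∂μ := by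
    rw [← integral_const_mul, ← integral_congr_ae h_scale, integral_add_right_eq_self]
  by_cases hs : s = 1
  · subst hs
    exact ae_eq_zero_of_periodic h_nonneg hh ha (by simpa only [one_mul] using h_scale)
  · have h_integral_zero : ∫ p, h p ∂μ = 0 := by
      by_contra hne
      exact hs (mul_right_cancel₀ hne (by rw [one_mul, ← h_integral]))
    exact (integral_eq_zero_iff_of_nonneg h_nonneg hh).1 h_integral_zero

end Translation

theorem weighted_translation_no_eigenvector_general
    (N : ℕ) (ℏ : ℝ) (hℏ : 0 < ℏ)
    (κ : EuclideanSpace ℝ (Fin N)) (hκ : κ ≠ 0)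
    (c : ℝ) (hc : 0 < c)
    (f : EuclideanSpace ℝ (Fin N) → ℂ)
    (hf_mod : ∀ᵐ p : EuclideanSpace ℝ (Fin N) ∂volume, ‖f p‖ = c)
    (μ : ℂ) (φ : EuclideanSpace ℝ (Fin N) → ℂ)
    (hφ_L2 : MemLp φ 2 (volume : Measure (EuclideanSpace ℝ (Fin N))))
    (heig : (fun p : EuclideanSpace ℝ (Fin N) => f (p + ℏ • κ) * φ (p + ℏ • κ))
      =ᵐ[volume] fun p => μ * φ p) :
    ∀ᵐ p : EuclideanSpace ℝ (Fin N) ∂volume, φ p = 0 := by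
  have hf_shift : ∀ᵐ p ∂volume, ‖f (p + ℏ • κ)‖ = c :=
    (measurePreserving_add_right volume (ℏ • κ)).quasiMeasurePreserving.ae hf_mod
  have h_scale : ∀ᵐ p ∂volume, ‖φ (p + ℏ • κ)‖ ^ 2 = (‖μ‖ / c) ^ 2 * ‖φ p‖ ^ 2 := by
    filter_upwards [heig, hf_shift] with p hp hfp
    have h_norm := congrArg norm hp
    rw [norm_mul, norm_mul, hfp] at h_norm
    rw [div_pow, div_mul_eq_mul_div, eq_div_iff (by positivity), ← mul_pow, ← mul_pow, ← h_norm,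
      mul_comm]
  have h_zero := ae_eq_zero_of_comp_add_ae_eq_mul (fun p => sq_nonneg ‖φ p‖)
    (hφ_L2.integrable_norm_pow two_ne_zero) (smul_ne_zero hℏ.ne' hκ) h_scale
  filter_upwards [h_zero] with p hp
  simpa using hp

/-- **Weighted translations with constant-modulus weight have no eigenvectors.**
In the momentum representation, the translation-invariant Lindblad jump operator
`(Aψ)(p) = f(p + ℏκ)·ψ(p + ℏκ)` with nonzero recoil momentum `ℏκ` and amplitude `f` of
constant modulus `c > 0` admits no eigenvector in `L²(ℝ^N, ℂ)`: if `Aφ = μφ` (as an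
a.e. identity of momentum wavefunctions) for some `μ ∈ ℂ` and `φ ∈ L²`, then `φ = 0`
almost everywhere. -/
theorem weighted_translation_no_eigenvector
    (N : ℕ) (ℏ : ℝ) (hℏ : 0 < ℏ)
    (κ : EuclideanSpace ℝ (Fin N)) (hκ : κ ≠ 0)
    (c : ℝ) (hc : 0 < c)
    (f : EuclideanSpace ℝ (Fin N) → ℂ) (hf_meas : Measurable f)
    (hf_mod : ∀ᵐ p : EuclideanSpace ℝ (Fin N) ∂volume, ‖f p‖ = c)
    (μ : ℂ) (φ : EuclideanSpace ℝ (Fin N) → ℂ)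
    (hφ_L2 : MemLp φ 2 (volume : Measure (EuclideanSpace ℝ (Fin N))))
    (heig : (fun p : EuclideanSpace ℝ (Fin N) => f (p + ℏ • κ) * φ (p + ℏ • κ))
      =ᵐ[volume] fun p => μ * φ p) :
    ∀ᵐ p : EuclideanSpace ℝ (Fin N) ∂volume, φ p = 0 :=
  weighted_translation_no_eigenvector_general N ℏ hℏ κ hκ c hc f hf_mod μ φ hφ_L2 heig
end

section
/- First-order thermal population conservation by the optimized exponential amplitude (Eqs. (11)–(12) of the paper): Let ℏ, m, ω, θ > 0 and κ, c ∈ ℝ. Set τ₀ = ℏω/(2θ), λ = κ·tanh(τ₀/2) (= κ·tanh(ℏω/(4θ))), and f(p) = c·exp(λ·p/(mω)). For τ > 0 define the Gaussian (Mehler) kernel G_τ(p, p') = exp( −(1/(4mℏω))·[ tanh(τ)·(p + p')² + coth(τ)·(p − p')² ] ), which is, up to normalization, the momentum-representation kernel of exp(−(2τ/(ℏω))·H) for the harmonic oscillator Hamiltonian H = p̂²/(2m) + mω²x̂²/2; in particular G_{τ₀} is proportional to the kernel of the thermal state ρ_θ ∝ exp(−H/θ). Define the dissipator kernel Δ(p,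 p') = f(p + ℏκ)·f(p' + ℏκ)·G_{τ₀}(p + ℏκ, p' + ℏκ) − (1/2)·( f(p)² + f(p')² )·G_{τ₀}(p, p'). Then for every τ > 0: ∫_ℝ ∫_ℝ G_τ(p, p')·Δ(p', p) dp dp' = 0. (Equivalently, Tr[exp(−αH)·D_A(ρ_θ)] = 0 for every α > 0, i.e. the dissipator built from the amplitude f of Eq. (12) leaves every thermal level population of ρ_θ instantaneously invariant.) -/
/-!
Both Mehler kernels are diagonal in `p + p'` and `p - p'`, and the exponential amplitude only adds
linear terms to the exponent, so the integrand is a combination of three Gaussians sharing one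
quadratic form: the gain term `f(p + ℏκ) f(p' + ℏκ) G_{τ₀}(p + ℏκ, p' + ℏκ)` and the two loss terms
`f(p)² G_{τ₀}` and `f(p')² G_{τ₀}`. Completing the square twice gives each double integral as
`π / (2√(PM)) · exp(u²/(4P) + v²/(4M))`. The gain exponent equals the loss exponent for every `τ`
because `tanh τ₀ = 2t / (1 + t²)` with `t = tanh(τ₀/2)`: this is where `λ = κ tanh(τ₀/2)` enters.
-/

open MeasureTheory Real

lemma exp_neg_mul_sq_add_mul_add_eq {A : ℝ} (hA : A ≠ 0) (B C x : ℝ) :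
    exp (-A * x ^ 2 + B * x + C)
      = exp (B ^ 2 / (4 * A) + C) * exp (-A * (x - B / (2 * A)) ^ 2) := by
  rw [← exp_add]
  congr 1
  field_simp
  ring

lemma integrable_exp_neg_mul_sq_add_mul_add {A : ℝ} (hA : 0 < A) (B C : ℝ) :
    Integrable fun x : ℝ => exp (-A * x ^ 2 + B * x + C) := by
  simp_rw [exp_neg_mul_sq_add_mul_add_eq hA.ne']
  exact ((integrable_exp_neg_mul_sq hA).comp_sub_right _).const_mul _

lemma integral_exp_neg_mul_sq_add_mul_add {A : ℝ} (hA : 0 < A) (B C : ℝ) :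
    ∫ x : ℝ, exp (-A * x ^ 2 + B * x + C) = √(π / A) * exp (B ^ 2 / (4 * A) + C) := by
  simp_rw [exp_neg_mul_sq_add_mul_add_eq hA.ne']
  rw [integral_const_mul, integral_sub_right_eq_self (fun x ↦ exp (-A * x ^ 2)),
    integral_gaussian, mul_comm]

/-- A Gaussian in the variables `x + y` and `x - y`, in which the Mehler kernels are diagonal. -/
noncomputable def sumDiffGaussian (P M u v x y : ℝ) : ℝ :=
  exp (-P * (x + y) ^ 2 - M * (x - y) ^ 2 + u * (x + y) + v * (x - y))

section sumDiffGaussian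

variable {P M : ℝ} (u v : ℝ)

lemma sumDiffGaussian_eq_quadratic_left (x y : ℝ) :
    sumDiffGaussian P M u v x y
      = exp (-(P + M) * x ^ 2 + (u + v - 2 * (P - M) * y) * x
          + (-(P + M) * y ^ 2 + (u - v) * y)) := by
  unfold sumDiffGaussian
  congr 1
  ring

lemma integrable_sumDiffGaussian_left (hPM : 0 < P + M) (y : ℝ) :
    Integrable fun x ↦ sumDiffGaussian P M u v x y := by
  simp_rw [sumDiffGaussian_eq_quadratic_left]
  exact integrable_exp_neg_mul_sq_add_mul_add hPM _ _

lemma integral_sumDiffGaussian_left (hPM : 0 < P + M) (y : ℝ) :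
    ∫ x, sumDiffGaussian P M u v x y
      = √(π / (P + M)) * exp (-(4 * P * M / (P + M)) * y ^ 2
          + (u - v - (u + v) * (P - M) / (P + M)) * y + (u + v) ^ 2 / (4 * (P + M))) := by
  simp_rw [sumDiffGaussian_eq_quadratic_left]
  rw [integral_exp_neg_mul_sq_add_mul_add hPM]
  congr 2
  field_simp
  ring

lemma integrable_integral_sumDiffGaussian_left (hP : 0 < P) (hM : 0 < M) :
    Integrable fun y ↦ ∫ x, sumDiffGaussian P M u v x y := by
  simp_rw [integral_sumDiffGaussian_left u v (add_pos hP hM)]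
  exact (integrable_exp_neg_mul_sq_add_mul_add (by positivity) _ _).const_mul _

lemma integral_integral_sumDiffGaussian (hP : 0 < P) (hM : 0 < M) :
    ∫ y, ∫ x, sumDiffGaussian P M u v x y
      = π / (2 * √(P * M)) * exp (u ^ 2 / (4 * P) + v ^ 2 / (4 * M)) := by
  simp_rw [integral_sumDiffGaussian_left u v (add_pos hP hM)]
  rw [integral_const_mul, integral_exp_neg_mul_sq_add_mul_add (by positivity), ← mul_assoc,
    ← sqrt_mul (by positivity)]
  congr 1
  · rw [show π / (P + M) * (π / (4 * P * M / (P + M))) = (π / (2 * √(P * M))) ^ 2 by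
      rw [div_pow, mul_pow, sq_sqrt (by positivity)]; field_simp; ring]
    exact sqrt_sq (by positivity)
  · congr 1
    field_simp
    ring

lemma integral_integral_mul_sub_mul_add_sumDiffGaussian (hP : 0 < P) (hM : 0 < M)
    (α β u₁ v₁ u₂ v₂ u₃ v₃ : ℝ) :
    ∫ y, ∫ x, (α * sumDiffGaussian P M u₁ v₁ x y
        - β * (sumDiffGaussian P M u₂ v₂ x y + sumDiffGaussian P M u₃ v₃ x y))
      = α * (∫ y, ∫ x, sumDiffGaussian P M u₁ v₁ x y)
        - β * ((∫ y, ∫ x, sumDiffGaussian P M u₂ v₂ x y)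
          + ∫ y, ∫ x, sumDiffGaussian P M u₃ v₃ x y) := by
  have hPM := add_pos hP hM
  have inner (u v : ℝ) := integrable_sumDiffGaussian_left (P := P) (M := M) u v hPM
  have outer (u v : ℝ) := integrable_integral_sumDiffGaussian_left u v hP hM
  have inner_eq (y : ℝ) : ∫ x, (α * sumDiffGaussian P M u₁ v₁ x y
        - β * (sumDiffGaussian P M u₂ v₂ x y + sumDiffGaussian P M u₃ v₃ x y))
      = α * (∫ x, sumDiffGaussian P M u₁ v₁ x y)
        - β * ((∫ x, sumDiffGaussian P M u₂ v₂ x y) + ∫ x, sumDiffGaussian P M u₃ v₃ x y) := by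
    rw [integral_sub, integral_const_mul, integral_const_mul, integral_add]
    all_goals fun_prop
  simp_rw [inner_eq]
  rw [integral_sub, integral_const_mul, integral_const_mul, integral_add]
  all_goals fun_prop

end sumDiffGaussian

lemma Real.tanh_two_mul (x : ℝ) : tanh (2 * x) = 2 * tanh x / (1 + tanh x ^ 2) := by
  have := cosh_pos x
  rw [tanh_eq_sinh_div_cosh, tanh_eq_sinh_div_cosh, sinh_two_mul, cosh_two_mul]
  field_simp

lemma Real.tanh_pos {x : ℝ} (hx : 0 < x) : 0 < tanh x := by
  rw [tanh_eq_sinh_div_cosh]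
  exact div_pos (sinh_pos_iff.2 hx) (cosh_pos x)

lemma Real.cosh_div_sinh_eq_inv_tanh (x : ℝ) : cosh x / sinh x = (tanh x)⁻¹ := by
  rw [tanh_eq_sinh_div_cosh, inv_div]

lemma gain_exponent_eq_loss_exponent {a b μ τ₀ τ : ℝ} (hb : b ≠ 0) (hτ₀ : 0 < τ₀) (hτ : 0 < τ)
    (hμ : μ = 4 * a * b * tanh (τ₀ / 2)) :
    2 * μ * a - 4 * a ^ 2 * b * tanh τ₀
        + (μ - 4 * a * b * tanh τ₀) ^ 2 / (4 * (b * (tanh τ + tanh τ₀)))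
      = μ ^ 2 / (4 * (b * (tanh τ + tanh τ₀)))
        + μ ^ 2 / (4 * (b * (cosh τ / sinh τ + cosh τ₀ / sinh τ₀))) := by
  have ht := tanh_pos (half_pos hτ₀)
  have hT := tanh_pos hτ
  have hT₀ : tanh τ₀ = 2 * tanh (τ₀ / 2) / (1 + tanh (τ₀ / 2) ^ 2) := by
    rw [← tanh_two_mul, mul_div_cancel₀ _ two_ne_zero]
  simp only [hμ, cosh_div_sinh_eq_inv_tanh, hT₀]
  field_simp
  ring

/-- **First-order thermal population conservation by the optimized exponential
amplitude** (Eqs. (11)–(12) of the paper). For the one-dimensional harmonic oscillator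
`H = p̂²/(2m) + mω²x̂²/2`, the Mehler kernel
`G_τ(p, p') = exp(−(1/(4mℏω))·[tanh(τ)(p + p')² + coth(τ)(p − p')²])` is (up to
normalization) the momentum-representation kernel of `exp(−(2τ/(ℏω))H)`, and
`G_{τ₀}` with `τ₀ = ℏω/(2θ)` is proportional to the kernel of the thermal state `ρ_θ`.
With the optimized amplitude `f(p) = c·exp(λp/(mω))`, `λ = κ·tanh(ℏω/(4θ))`, the
dissipator kernel `Δ` (of `D_A(ρ_θ)` for `(Aψ)(p) = f(p + ℏκ)ψ(p + ℏκ)`) satisfies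
`∫∫ G_τ(p, p')·Δ(p', p) dp dp' = 0` for all `τ > 0`, i.e. `Tr[exp(−αH)·D_A(ρ_θ)] = 0`
for every `α > 0`: every thermal level population is instantaneously invariant. -/
theorem thermal_population_conservation
    (ℏ m ω θ : ℝ) (hℏ : 0 < ℏ) (hm : 0 < m) (hω : 0 < ω) (hθ : 0 < θ)
    (κ c : ℝ)
    (τ₀ lam : ℝ) (hτ₀ : τ₀ = ℏ * ω / (2 * θ)) (hlam : lam = κ * Real.tanh (τ₀ / 2))
    (f : ℝ → ℝ) (hf : ∀ p, f p = c * Real.exp (lam * p / (m * ω)))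
    (G : ℝ → ℝ → ℝ → ℝ)
    (hG : ∀ τ p p', G τ p p' = Real.exp (-(1 / (4 * m * ℏ * ω)) *
        (Real.tanh τ * (p + p') ^ 2 + (Real.cosh τ / Real.sinh τ) * (p - p') ^ 2)))
    (Δ : ℝ → ℝ → ℝ)
    (hΔ : ∀ p p', Δ p p' =
        f (p + ℏ * κ) * f (p' + ℏ * κ) * G τ₀ (p + ℏ * κ) (p' + ℏ * κ)
          - (1 / 2) * (f p ^ 2 + f p' ^ 2) * G τ₀ p p') :
    ∀ τ : ℝ, 0 < τ → (∫ p' : ℝ, ∫ p : ℝ, G τ p p' * Δ p' p) = 0 := by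
  intro τ hτ
  have hτ₀pos : 0 < τ₀ := hτ₀ ▸ by positivity
  have key := congrArg exp <| gain_exponent_eq_loss_exponent (a := ℏ * κ) (b := 1 / (4 * m * ℏ * ω))
    (μ := lam / (m * ω)) (by positivity) hτ₀pos hτ (by rw [hlam]; field_simp)
  set b := 1 / (4 * m * ℏ * ω)
  set a := ℏ * κ
  set μ := lam / (m * ω) with hμ_def
  set P := b * (tanh τ + tanh τ₀) with hP_def
  set M := b * (cosh τ / sinh τ + cosh τ₀ / sinh τ₀) with hM_def
  have hb : 0 < b := by positivity
  have hP : 0 < P := mul_pos hb (add_pos (tanh_pos hτ) (tanh_pos hτ₀pos))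
  have hM : 0 < M := mul_pos hb (add_pos (div_pos (cosh_pos τ) (sinh_pos_iff.2 hτ))
    (div_pos (cosh_pos τ₀) (sinh_pos_iff.2 hτ₀pos)))
  have hpt (x y : ℝ) : G τ x y * Δ y x
      = c ^ 2 * exp (2 * μ * a - 4 * a ^ 2 * b * tanh τ₀)
          * sumDiffGaussian P M (μ - 4 * a * b * tanh τ₀) 0 x y
        - c ^ 2 / 2 * (sumDiffGaussian P M μ (-μ) x y + sumDiffGaussian P M μ μ x y) := by
    simp only [hΔ, hf, hG, sumDiffGaussian, hP_def, hM_def, hμ_def, mul_pow, sq (exp _), ← exp_add]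
    ring_nf
    simp only [mul_assoc, mul_left_comm _ (c ^ 2), ← exp_add]
    ring_nf
  simp_rw [hpt]
  rw [integral_integral_mul_sub_mul_add_sumDiffGaussian hP hM,
    integral_integral_sumDiffGaussian _ _ hP hM, integral_integral_sumDiffGaussian _ _ hP hM,
    integral_integral_sumDiffGaussian _ _ hP hM]
  rw [exp_add] at key
  simp only [ne_eq, OfNat.ofNat_ne_zero, not_false_eq_true, zero_pow, zero_div, add_zero, neg_sq]
  linear_combination (π / (2 * √(P * M)) * c ^ 2) * key
end
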